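/- Let k be a number field, n ≥ 2 an integer, D a finite set of k-rational points of ℙⁿ, and L a line in ℙⁿ defined over k such that no point of D lies on L. For each place v of k let n_v be a non-negative real number, with n_v = 0 for all but finitely many places v. Suppose there exists P ∈ L(k) such that λ_{d,v}(P) ≤ n_v for every finite place v and every d ∈ D, and λ_{d,w}(P) < n_w for every infinite place w and every d ∈ D. Then there are infinitely many points Q ∈ L(k) satisfying λ_{d,v}(Q) ≤ n_v for every place v of k and every d ∈ D. (This is the genus-zero case of the theorem on everywhere-integral points of curves, for the curve C = L in V = ℙⁿ and D a finite set of points disjoint from C.) -/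

import Mathlib

/-!
Through `P` the line is parametrised by `Q_t = [P + t U]` for a second point `U` of `L`.
For each `d ∈ D`, the points of `L` are recovered linearly from their minors with `d`
(since `d ∉ L`); at the cofinitely many finite places where these coefficients and the
coordinates of `d` are integral, the ultrametric inequality gives `‖d‖_v ‖Q‖_v ≤ δ_v(d, Q)`,
i.e. `λ_{d,v}(Q) ≤ 0 ≤ n_v`, for every `Q ∈ L(k)`. At each remaining finite place
`λ_{d,v}(Q_t) = λ_{d,v}(P)` as soon as `|t|_v` is small, again by the ultrametric inequality,
and at the infinite places `λ_{d,w}(Q_t) → λ_{d,w}(P) < n_w` as `t → 0`. Taking `t = s^k` for an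
`s ≠ 0` that is small at all these places gives infinitely many points for large `k`.
-/

open NumberField IsDedekindDomain

/-- The finite places of a number field `K`: the nonzero prime ideals of its ring of
integers. -/
abbrev FinPlace (K : Type) [Field K] [NumberField K] := HeightOneSpectrum (𝓞 K)

/-- The places of a number field `K`: either a finite place or an infinite place (the
latter arising from an embedding of `K` into `ℂ`). -/
abbrev Place (K : Type) [Field K] [NumberField K] :=
  FinPlace K ⊕ NumberField.InfinitePlace K

/-- The normalized `v`-adic absolute value attached to a finite place `v` of `K`:
`|x|_v = (N 𝔭)^(-ord_v x)` where `N 𝔭` is the absolute norm of the prime ideal. -/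
noncomputable def finAbs {K : Type} [Field K] [NumberField K] (v : FinPlace K) (x : K) : ℝ :=
  (WithZeroMulInt.toNNReal (e := (Ideal.absNorm v.asIdeal : NNReal))
    (by
      refine Nat.cast_ne_zero (R := NNReal) |>.mpr ?_
      simpa [Ideal.absNorm_eq_zero_iff] using v.ne_bot)
    (v.valuation K x) : ℝ)

/-- The absolute value `|·|_v` attached to a place `v` of `K`: the normalized `𝔭`-adic
absolute value at a finite place, and the absolute value induced by the corresponding
embedding at an infinite place. -/
noncomputable def placeAbs {K : Type} [Field K] [NumberField K] : Place K → K → ℝ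
  | .inl v => finAbs v
  | .inr w => fun x => w x

/-- `‖q‖_v = max (|q₀|_v, …, |q_n|_v)`: the `v`-adic sup norm of a coordinate vector. -/
noncomputable def projNorm {K : Type} [Field K] [NumberField K] {n : ℕ} (v : Place K)
    (q : Fin (n + 1) → K) : ℝ :=
  ⨆ i, placeAbs v (q i)

/-- `δ_v(d, q) = max_{0 ≤ i < j ≤ n} |dᵢ qⱼ − dⱼ qᵢ|_v`, written as the maximum over all
pairs `(i, j)`, which agrees with the maximum over `i < j` since the quantity is symmetric
under swapping `i` and `j` and vanishes (hence does not contribute) for `i = j`. -/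
noncomputable def projDelta {K : Type} [Field K] [NumberField K] {n : ℕ} (v : Place K)
    (d q : Fin (n + 1) → K) : ℝ :=
  ⨆ p : Fin (n + 1) × Fin (n + 1), placeAbs v (d p.1 * q p.2 - d p.2 * q p.1)

/-- The standard Weil function `λ_{d,v}(Q) = log (‖d‖_v · ‖Q‖_v / δ_v(d, Q))` of the point
`d` at the place `v`, computed using the canonical representatives (mathematically it is
independent of the choice of homogeneous coordinates). -/
noncomputable def weil {K : Type} [Field K] [NumberField K] {n : ℕ} (v : Place K)
    (d Q : Projectivization K (Fin (n + 1) → K)) : ℝ :=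
  Real.log (projNorm v d.rep * projNorm v Q.rep / projDelta v d.rep Q.rep)

open Filter Topology

lemma Set.infinite_of_injective_eventually_mem {α : Type*} {s : Set α} {f : ℕ → α}
    (hf : Function.Injective f) (h : ∀ᶠ k in atTop, f k ∈ s) : s.Infinite := by
  obtain ⟨k₀, hk₀⟩ := eventually_atTop.1 h
  exact Set.infinite_of_injective_forall_mem (hf.comp (add_left_injective k₀))
    fun k => hk₀ _ le_add_self

namespace AbsoluteValue

variable {R ι : Type*} [Ring R] (abv : AbsoluteValue R ℝ)

noncomputable def supNorm (x : ι → R) : ℝ :=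
  ⨆ i, abv (x i)

lemma supNorm_nonneg (x : ι → R) : 0 ≤ abv.supNorm x :=
  Real.iSup_nonneg fun i => abv.nonneg (x i)

lemma supNorm_le {x : ι → R} {C : ℝ} (h : ∀ i, abv (x i) ≤ C) (hC : 0 ≤ C) :
    abv.supNorm x ≤ C :=
  Real.iSup_le h hC

lemma le_supNorm [Finite ι] (x : ι → R) (i : ι) : abv (x i) ≤ abv.supNorm x :=
  Finite.le_ciSup (fun i => abv (x i)) i

lemma supNorm_pos [Finite ι] {x : ι → R} (hx : x ≠ 0) : 0 < abv.supNorm x := by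
  obtain ⟨i, hi⟩ := Function.ne_iff.1 hx
  exact (abv.pos hi).trans_le (abv.le_supNorm x i)

lemma supNorm_smul (a : R) (x : ι → R) : abv.supNorm (a • x) = abv a * abv.supNorm x := by
  simp only [supNorm, Pi.smul_apply, smul_eq_mul, map_mul,
    Real.mul_iSup_of_nonneg (abv.nonneg a)]

lemma supNorm_neg (x : ι → R) : abv.supNorm (-x) = abv.supNorm x := by
  simp only [supNorm, Pi.neg_apply, abv.map_neg]

lemma supNorm_add_le [Finite ι] (x y : ι → R) :
    abv.supNorm (x + y) ≤ abv.supNorm x + abv.supNorm y :=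
  abv.supNorm_le (fun i => (abv.add_le _ _).trans (add_le_add (abv.le_supNorm x i)
    (abv.le_supNorm y i))) (add_nonneg (abv.supNorm_nonneg x) (abv.supNorm_nonneg y))

lemma abs_supNorm_add_sub_le [Finite ι] (x y : ι → R) :
    |abv.supNorm (x + y) - abv.supNorm x| ≤ abv.supNorm y := by
  have h := abv.supNorm_add_le (x + y) (-y)
  rw [add_neg_cancel_right, supNorm_neg] at h
  rw [abs_sub_le_iff]
  constructor <;> linarith [abv.supNorm_add_le x y]

lemma supNorm_add_eq_left_of_lt (hna : IsNonarchimedean abv) [Finite ι] {x y : ι → R}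
    (h : abv.supNorm y < abv.supNorm x) : abv.supNorm (x + y) = abv.supNorm x := by
  cases isEmpty_or_nonempty ι
  · simp [supNorm]
  refine le_antisymm (abv.supNorm_le (fun i => (hna _ _).trans (max_le (abv.le_supNorm x i)
    ((abv.le_supNorm y i).trans h.le))) (abv.supNorm_nonneg x)) ?_
  obtain ⟨i, hi⟩ := exists_eq_ciSup_of_finite (f := fun i => abv (x i))
  have hyi : abv (y i) < abv (x i) := (abv.le_supNorm y i).trans_lt (hi ▸ h)
  calc abv.supNorm x = abv (x i + y i) := by rw [supNorm, ← hi, hna.add_eq_left_of_lt hyi]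
    _ ≤ abv.supNorm (x + y) := abv.le_supNorm (x + y) i

variable {α : Type*} {l : Filter α} {σ : α → R}

lemma tendsto_supNorm_add_smul [Finite ι] (hσ : Tendsto (fun a => abv (σ a)) l (𝓝 0))
    (x y : ι → R) :
    Tendsto (fun a => abv.supNorm (x + σ a • y)) l (𝓝 (abv.supNorm x)) := by
  have h : Tendsto (fun a => abv (σ a) * abv.supNorm y) l (𝓝 0) := by
    simpa using hσ.mul_const (abv.supNorm y)
  refine tendsto_sub_nhds_zero_iff.1 (squeeze_zero_norm (fun a => ?_) h)
  rw [Real.norm_eq_abs, ← supNorm_smul]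
  exact abv.abs_supNorm_add_sub_le x _

lemma eventually_supNorm_add_smul_eq (hna : IsNonarchimedean abv) [Finite ι]
    (hσ : Tendsto (fun a => abv (σ a)) l (𝓝 0)) {x : ι → R} (hx : x ≠ 0) (y : ι → R) :
    ∀ᶠ a in l, abv.supNorm (x + σ a • y) = abv.supNorm x := by
  have h : Tendsto (fun a => abv (σ a) * abv.supNorm y) l (𝓝 0) := by
    simpa using hσ.mul_const (abv.supNorm y)
  filter_upwards [h.eventually_lt_const (abv.supNorm_pos hx)] with a ha
  exact abv.supNorm_add_eq_left_of_lt hna (by rwa [supNorm_smul])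

lemma tendsto_apply_pow_atTop_nhds_zero [Nontrivial R] {x : R} (hx : abv x < 1) :
    Tendsto (fun k : ℕ => abv (x ^ k)) atTop (𝓝 0) := by
  simpa only [abv.map_pow] using tendsto_pow_atTop_nhds_zero_of_lt_one (abv.nonneg x) hx

lemma pow_right_injective_of_lt_one [Nontrivial R] {x : R} (hx0 : x ≠ 0) (hx : abv x < 1) :
    Function.Injective fun k : ℕ => x ^ k :=
  Function.Injective.of_comp (f := abv) <| by
    simpa only [Function.comp_def, abv.map_pow] using pow_right_injective₀ (abv.pos hx0) hx.ne

end AbsoluteValue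

section Minors

variable {K ι : Type*} [Field K]

def minors (d : ι → K) : (ι → K) →ₗ[K] (ι × ι → K) where
  toFun q p := d p.1 * q p.2 - d p.2 * q p.1
  map_add' q q' := by ext p; simp only [Pi.add_apply]; ring
  map_smul' a q := by ext p; simp only [Pi.smul_apply, smul_eq_mul, RingHom.id_apply]; ring

lemma mem_span_singleton_of_minors_eq_zero {d q : ι → K} (hq : q ≠ 0) (h : minors d q = 0) :
    d ∈ K ∙ q := by
  obtain ⟨j, hj⟩ := Function.ne_iff.1 hq
  refine Submodule.mem_span_singleton.2 ⟨d j / q j, funext fun i => ?_⟩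
  have hji : d j * q i - d i * q j = 0 := congrFun h (j, i)
  rw [Pi.smul_apply, smul_eq_mul, div_mul_eq_mul_div, div_eq_iff (by simpa using hj)]
  linear_combination hji

lemma minors_ne_zero {W : Submodule K (ι → K)} {d q : ι → K} (hq : q ≠ 0) (hqW : q ∈ W)
    (hd : d ∉ W) : minors d q ≠ 0 :=
  fun h => hd <| (Submodule.span_singleton_le_iff_mem q W).2 hqW <|
    mem_span_singleton_of_minors_eq_zero hq h

lemma exists_eq_sum_mul_minors [Fintype ι] [DecidableEq ι] {W : Submodule K (ι → K)}
    {d : ι → K} (hd : d ∉ W) :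
    ∃ A : ι × (ι × ι) → K, ∀ q ∈ W, ∀ j, q j = ∑ p, A (j, p) * minors d q p := by
  have hinj : LinearMap.ker (minors d ∘ₗ W.subtype) = ⊥ :=
    LinearMap.ker_eq_bot'.2 fun q hq => by
      by_contra h
      exact minors_ne_zero (by simpa using h) q.2 hd hq
  obtain ⟨Ψ, hΨ⟩ := LinearMap.exists_leftInverse_of_injective _ hinj
  refine ⟨fun jp => LinearMap.toMatrix' (W.subtype ∘ₗ Ψ) jp.1 jp.2, fun q hq j => ?_⟩
  have h := congrFun (LinearMap.toMatrix'_mulVec (W.subtype ∘ₗ Ψ) (minors d q)) j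
  have hq' : W.subtype (Ψ (minors d q)) = q :=
    congrArg Subtype.val (LinearMap.congr_fun hΨ ⟨q, hq⟩)
  rw [LinearMap.comp_apply, hq'] at h
  rw [← h, Matrix.mulVec, dotProduct]

end Minors

section Line

variable {K V : Type*} [Field K] [AddCommGroup V] [Module K V] {x y : V}

lemma LinearIndependent.add_smul_ne_zero (h : LinearIndependent K ![x, y]) (t : K) :
    x + t • y ≠ 0 := fun h0 =>
  one_ne_zero (LinearIndependent.pair_iff.1 h 1 t (by rwa [one_smul])).1

lemma Projectivization.mk_add_smul_injective (h : LinearIndependent K ![x, y]) :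
    Function.Injective fun t : K => mk K (x + t • y) (h.add_smul_ne_zero t) := by
  intro s t hst
  obtain ⟨a, ha⟩ := (mk_eq_mk_iff K _ _ _ _).1 hst
  obtain ⟨ha1, hat⟩ := LinearIndependent.pair_iff.1 h ((a : K) - 1) ((a : K) * t - s) <| by
    rw [Units.smul_def] at ha
    linear_combination (norm := module) ha
  rw [sub_eq_zero] at ha1 hat
  rw [← hat, ha1, one_mul]

lemma exists_mem_linearIndependent_pair {W : Submodule K V} (hW : 1 < Module.finrank K W)
    (hx : x ≠ 0) : ∃ u ∈ W, LinearIndependent K ![x, u] := by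
  by_contra! h
  have hle : W ≤ K ∙ x := fun u hu => by
    obtain ⟨a, rfl⟩ := not_forall_not.1 (mt (LinearIndependent.pair_iff' hx).2 (h u hu))
    exact Submodule.smul_mem _ a (Submodule.mem_span_singleton_self x)
  have := Submodule.finrank_mono hle
  rw [finrank_span_singleton hx] at this
  omega

lemma Projectivization.rep_mk_mem {W : Submodule K V} {v : V} (hv : v ≠ 0) (hvW : v ∈ W) :
    (mk K v hv).rep ∈ W := by
  obtain ⟨a, ha⟩ := exists_smul_eq_mk_rep K v hv
  exact ha ▸ W.smul_of_tower_mem a hvW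

end Line

section WeilRatio

variable {K ι : Type*} [Field K] (abv : AbsoluteValue K ℝ)

noncomputable def weilRatio (d q : ι → K) : ℝ :=
  abv.supNorm d * abv.supNorm q / abv.supNorm (minors d q)

lemma weilRatio_nonneg (d q : ι → K) : 0 ≤ weilRatio abv d q :=
  div_nonneg (mul_nonneg (abv.supNorm_nonneg d) (abv.supNorm_nonneg q)) (abv.supNorm_nonneg _)

lemma weilRatio_smul_right (d q : ι → K) {a : K} (ha : a ≠ 0) :
    weilRatio abv d (a • q) = weilRatio abv d q := by
  rw [weilRatio, weilRatio, map_smul, abv.supNorm_smul, abv.supNorm_smul, mul_left_comm,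
    mul_div_mul_left _ _ (abv.ne_zero ha)]

lemma weilRatio_le_one [Fintype ι] (hna : IsNonarchimedean abv) {d q : ι → K}
    (hd : ∀ i, abv (d i) ≤ 1) {A : ι × (ι × ι) → K} (hA : ∀ jp, abv (A jp) ≤ 1)
    (hq : ∀ j, q j = ∑ p, A (j, p) * minors d q p) :
    weilRatio abv d q ≤ 1 := by
  have hq_le : abv.supNorm q ≤ abv.supNorm (minors d q) := by
    calc abv.supNorm q = ⨆ j, abv (∑ p, A (j, p) * minors d q p) := by simp only [← hq]; rfl
      _ ≤ (⨆ jp, abv (A jp)) * abv.supNorm (minors d q) := hna.iSup_abv_linearMap_apply_le A _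
      _ ≤ abv.supNorm (minors d q) :=
        mul_le_of_le_one_left (abv.supNorm_nonneg _) (Real.iSup_le hA zero_le_one)
  refine div_le_one_of_le₀ ?_ (abv.supNorm_nonneg _)
  exact (mul_le_of_le_one_left (abv.supNorm_nonneg q) (abv.supNorm_le hd zero_le_one)).trans hq_le

lemma weilRatio_pos [Finite ι] {d q : ι → K} (hdq : minors d q ≠ 0) : 0 < weilRatio abv d q := by
  have hd : d ≠ 0 := by rintro rfl; exact hdq (by ext; simp [minors])
  have hq : q ≠ 0 := by rintro rfl; exact hdq (map_zero _)
  exact div_pos (mul_pos (abv.supNorm_pos hd) (abv.supNorm_pos hq)) (abv.supNorm_pos hdq)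

variable {α : Type*} {l : Filter α} {σ : α → K}

lemma tendsto_weilRatio_add_smul [Finite ι] (hσ : Tendsto (fun a => abv (σ a)) l (𝓝 0))
    {d q : ι → K} (hdq : minors d q ≠ 0) (u : ι → K) :
    Tendsto (fun a => weilRatio abv d (q + σ a • u)) l (𝓝 (weilRatio abv d q)) := by
  have hminors := abv.tendsto_supNorm_add_smul hσ (minors d q) (minors d u)
  simp only [← map_smul, ← map_add] at hminors
  exact (tendsto_const_nhds.mul (abv.tendsto_supNorm_add_smul hσ q u)).div hminors
    (abv.supNorm_pos hdq).ne'

lemma eventually_weilRatio_add_smul_eq [Finite ι] (hna : IsNonarchimedean abv)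
    (hσ : Tendsto (fun a => abv (σ a)) l (𝓝 0)) {d q : ι → K} (hq : q ≠ 0)
    (hdq : minors d q ≠ 0) (u : ι → K) :
    ∀ᶠ a in l, weilRatio abv d (q + σ a • u) = weilRatio abv d q := by
  filter_upwards [abv.eventually_supNorm_add_smul_eq hna hσ hq u,
    abv.eventually_supNorm_add_smul_eq hna hσ hdq (minors d u)] with a hqa hdqa
  rw [weilRatio, weilRatio, map_add, map_smul, hqa, hdqa]

end WeilRatio

section NumberField

variable {K : Type} [Field K] [NumberField K] {n : ℕ}

noncomputable def placeAbv : Place K → AbsoluteValue K ℝ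
  | .inl v => NumberField.HeightOneSpectrum.adicAbv K v
  | .inr w => w.1

lemma isNonarchimedean_placeAbv_inl (v : FinPlace K) : IsNonarchimedean (placeAbv (.inl v)) :=
  NumberField.HeightOneSpectrum.isNonarchimedean_adicAbv K v

lemma weil_eq_log_weilRatio (v : Place K) (d Q : Projectivization K (Fin (n + 1) → K)) :
    weil v d Q = Real.log (weilRatio (placeAbv v) d.rep Q.rep) := by
  cases v <;> rfl

lemma weil_mk (v : Place K) (d : Projectivization K (Fin (n + 1) → K)) {q : Fin (n + 1) → K}
    (hq : q ≠ 0) : weil v d (.mk K q hq) = Real.log (weilRatio (placeAbv v) d.rep q) := by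
  obtain ⟨a, ha⟩ := Projectivization.exists_smul_eq_mk_rep K q hq
  rw [weil_eq_log_weilRatio, ← ha, Units.smul_def, weilRatio_smul_right _ _ _ a.ne_zero]

lemma eventually_placeAbv_inl_le_one (x : K) :
    ∀ᶠ v : FinPlace K in cofinite, placeAbv (.inl v) x ≤ 1 := by
  rcases eq_or_ne x 0 with rfl | hx
  · exact Eventually.of_forall fun v => by simp
  refine ((FinitePlace.hasFiniteMulSupport hx).preimage
    fun _ _ _ _ h => FinitePlace.mk_eq_iff.1 h).subset fun v hv => ?_
  simp only [Set.mem_preimage, Function.mem_mulSupport, FinitePlace.mk_apply,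
    FinitePlace.norm_embedding]
  exact ne_of_gt (not_le.1 hv)

lemma eventually_weil_nonpos {W : Submodule K (Fin (n + 1) → K)}
    {D : Finset (Projectivization K (Fin (n + 1) → K))} (hD : ∀ d ∈ D, d.rep ∉ W) :
    ∀ᶠ v : FinPlace K in cofinite, ∀ d ∈ D, ∀ Q : Projectivization K (Fin (n + 1) → K),
      Q.rep ∈ W → weil (.inl v) d Q ≤ 0 := by
  refine (eventually_all_finset D).2 fun d hd => ?_
  obtain ⟨A, hA⟩ := exists_eq_sum_mul_minors (hD d hd)
  have hd1 := eventually_all.2 fun i => eventually_placeAbv_inl_le_one (d.rep i)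
  have hA1 := eventually_all.2 fun jp => eventually_placeAbv_inl_le_one (A jp)
  filter_upwards [hd1, hA1] with v hdv hAv Q hQ
  rw [weil_eq_log_weilRatio]
  exact Real.log_nonpos (weilRatio_nonneg _ _ _)
    (weilRatio_le_one _ (isNonarchimedean_placeAbv_inl v) hdv hAv (hA Q.rep hQ))

lemma exists_ne_zero_placeAbv_lt_one {S : Set (FinPlace K)} (hS : S.Finite) :
    ∃ s : K, s ≠ 0 ∧ (∀ v ∈ S, placeAbv (.inl v) s < 1) ∧
      ∀ w : InfinitePlace K, placeAbv (.inr w) s < 1 := by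
  set m : ℕ := ∏ v ∈ hS.toFinset, Ideal.absNorm v.asIdeal
  have hm : m ≠ 0 := Finset.prod_ne_zero_iff.2 fun v _ =>
    (HeightOneSpectrum.one_lt_absNorm v).ne_bot
  -- `m` lies in every prime of `S`, so there `|m|_v < 1` and `|m + 1|_v = 1`.
  refine ⟨m / (m + 1 : ℕ), div_ne_zero (Nat.cast_ne_zero.2 hm) (Nat.cast_ne_zero.2 m.succ_ne_zero),
    fun v hv => ?_, fun w => ?_⟩
  · have hmv : placeAbv (.inl v) (m : K) < 1 := by
      rw [← map_natCast (algebraMap (𝓞 K) K)]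
      refine (IsDedekindDomain.HeightOneSpectrum.adicAbv_coe_lt_one_iff v _ _).2 ?_
      exact Ideal.mem_of_dvd _ (Nat.cast_dvd_cast (Finset.dvd_prod_of_mem _
        (hS.mem_toFinset.2 hv))) (Ideal.absNorm_mem v.asIdeal)
    rw [map_div₀, Nat.cast_succ, add_comm, (isNonarchimedean_placeAbv_inl v).add_eq_left_of_lt
      (by rwa [map_one]), map_one, div_one]
    exact hmv
  · change w (m / (m + 1 : ℕ)) < 1
    rw [map_div₀, InfinitePlace.map_natCast, InfinitePlace.map_natCast, div_lt_one (by positivity)]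
    exact_mod_cast m.lt_succ_self

end NumberField

section Pencil

variable {K : Type} [Field K] [NumberField K] {n : ℕ} {α : Type*} {l : Filter α} {σ : α → K}
  {d P : Projectivization K (Fin (n + 1) → K)} {u : Fin (n + 1) → K}

lemma tendsto_weil_mk_add_smul (v : Place K) (hσ : Tendsto (fun a => placeAbv v (σ a)) l (𝓝 0))
    (hdP : minors d.rep P.rep ≠ 0) (hu : ∀ t : K, P.rep + t • u ≠ 0) :
    Tendsto (fun a => weil v d (.mk K (P.rep + σ a • u) (hu (σ a)))) l (𝓝 (weil v d P)) := by
  simp only [weil_mk]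
  rw [weil_eq_log_weilRatio]
  exact ((Real.continuousAt_log (weilRatio_pos _ hdP).ne').tendsto).comp
    (tendsto_weilRatio_add_smul _ hσ hdP u)

lemma eventually_weil_mk_add_smul_eq (v : FinPlace K)
    (hσ : Tendsto (fun a => placeAbv (.inl v) (σ a)) l (𝓝 0))
    (hdP : minors d.rep P.rep ≠ 0) (hu : ∀ t : K, P.rep + t • u ≠ 0) :
    ∀ᶠ a in l, weil (.inl v) d (.mk K (P.rep + σ a • u) (hu (σ a))) = weil (.inl v) d P := by
  filter_upwards [eventually_weilRatio_add_smul_eq _ (isNonarchimedean_placeAbv_inl v) hσ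
    P.rep_nonzero hdP u] with a ha
  rw [weil_mk, weil_eq_log_weilRatio, ha]

end Pencil

theorem infinitely_many_everywhere_integral_points_on_line_general
    (K : Type) [Field K] [NumberField K] (n : ℕ)
    (D : Finset (Projectivization K (Fin (n + 1) → K)))
    (M : (Fin 2 → K) →ₗ[K] (Fin (n + 1) → K)) (hM : Function.Injective M)
    (hDL : ∀ d ∈ D, d.rep ∉ LinearMap.range M)
    (c : Place K → ℝ) (hc0 : ∀ v, 0 ≤ c v)
    (P : Projectivization K (Fin (n + 1) → K)) (hPL : P.rep ∈ LinearMap.range M)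
    (hPfin : ∀ v : FinPlace K, ∀ d ∈ D, weil (Sum.inl v) d P ≤ c (Sum.inl v))
    (hPinf : ∀ w : NumberField.InfinitePlace K, ∀ d ∈ D,
      weil (Sum.inr w) d P < c (Sum.inr w)) :
    {Q : Projectivization K (Fin (n + 1) → K) | Q.rep ∈ LinearMap.range M ∧
      ∀ v : Place K, ∀ d ∈ D, weil v d Q ≤ c v}.Infinite := by
  set W := LinearMap.range M
  obtain ⟨U, hUW, hPU⟩ := exists_mem_linearIndependent_pair (W := W)
    (by simp [W, LinearMap.finrank_range_of_inj hM]) P.rep_nonzero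
  obtain ⟨S, hS, hgood⟩ : ∃ S : Set (FinPlace K), S.Finite ∧ ∀ v ∉ S, ∀ d ∈ D,
      ∀ Q : Projectivization K (Fin (n + 1) → K), Q.rep ∈ W → weil (.inl v) d Q ≤ 0 :=
    ⟨_, eventually_cofinite.1 (eventually_weil_nonpos hDL), fun v hv => not_not.1 hv⟩
  obtain ⟨s, hs0, hsS, hsw⟩ := exists_ne_zero_placeAbv_lt_one hS
  set Q : ℕ → Projectivization K (Fin (n + 1) → K) :=
    fun k => .mk K (P.rep + s ^ k • U) (hPU.add_smul_ne_zero _)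
  have hQW k : (Q k).rep ∈ W :=
    Projectivization.rep_mk_mem _ (W.add_mem hPL (W.smul_mem _ hUW))
  have hdP d (hd : d ∈ D) : minors d.rep P.rep ≠ 0 := minors_ne_zero P.rep_nonzero hPL (hDL d hd)
  have hbad : ∀ᶠ k in atTop, ∀ v ∈ S, ∀ d ∈ D, weil (.inl v) d (Q k) = weil (.inl v) d P :=
    hS.eventually_all.2 fun v hv => (eventually_all_finset D).2 fun d hd =>
      eventually_weil_mk_add_smul_eq v
        ((placeAbv _).tendsto_apply_pow_atTop_nhds_zero (hsS v hv)) (hdP d hd) _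
  have harch : ∀ᶠ k in atTop, ∀ w, ∀ d ∈ D, weil (.inr w) d (Q k) < c (.inr w) :=
    eventually_all.2 fun w => (eventually_all_finset D).2 fun d hd =>
      (tendsto_weil_mk_add_smul _ ((placeAbv _).tendsto_apply_pow_atTop_nhds_zero (hsw w))
        (hdP d hd) _).eventually_lt_const (hPinf w d hd)
  refine Set.infinite_of_injective_eventually_mem ((Projectivization.mk_add_smul_injective hPU).comp
    ((placeAbv _).pow_right_injective_of_lt_one hs0 (hsw (Classical.arbitrary _)))) ?_
  filter_upwards [hbad, harch] with k hkS hkw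
  refine ⟨hQW k, ?_⟩
  rintro (v | w) d hd
  · by_cases hv : v ∈ S
    · exact (hkS v hv d hd).trans_le (hPfin v d hd)
    · exact (hgood v hv d hd _ (hQW k)).trans (hc0 _)
  · exact (hkw w d hd).le

/-- Let `k` be a number field, `n ≥ 2`, `D` a finite set of `k`-rational
points of `ℙⁿ`, and `L` a line in `ℙⁿ` over `k` (the image of the map `ℙ¹ → ℙⁿ` induced by
an injective linear map `M : k² → k^{n+1}`) such that no point of `D` lies on `L`. For each
place `v` let `n_v ≥ 0`, with `n_v = 0` for all but finitely many places. Suppose there is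
`P ∈ L(k)` with `λ_{d,v}(P) ≤ n_v` for every finite place `v` and every `d ∈ D`, and
`λ_{d,w}(P) < n_w` for every infinite place `w` and every `d ∈ D`. Then there are
infinitely many `Q ∈ L(k)` with `λ_{d,v}(Q) ≤ n_v` for every place `v` and every
`d ∈ D`. -/
theorem infinitely_many_everywhere_integral_points_on_line
    (K : Type) [Field K] [NumberField K] (n : ℕ) (hn : 2 ≤ n)
    (D : Finset (Projectivization K (Fin (n + 1) → K)))
    (M : (Fin 2 → K) →ₗ[K] (Fin (n + 1) → K)) (hM : Function.Injective M)
    (hDL : ∀ d ∈ D, d.rep ∉ LinearMap.range M)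
    (c : Place K → ℝ) (hc0 : ∀ v, 0 ≤ c v) (hcfin : {v : Place K | c v ≠ 0}.Finite)
    (P : Projectivization K (Fin (n + 1) → K)) (hPL : P.rep ∈ LinearMap.range M)
    (hPfin : ∀ v : FinPlace K, ∀ d ∈ D, weil (Sum.inl v) d P ≤ c (Sum.inl v))
    (hPinf : ∀ w : NumberField.InfinitePlace K, ∀ d ∈ D,
      weil (Sum.inr w) d P < c (Sum.inr w)) :
    {Q : Projectivization K (Fin (n + 1) → K) | Q.rep ∈ LinearMap.range M ∧
      ∀ v : Place K, ∀ d ∈ D, weil v d Q ≤ c v}.Infinite :=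
  infinitely_many_everywhere_integral_points_on_line_general K n D M hM hDL c hc0 P hPL hPfin hPinf
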